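/- arXiv:1301.4624 — 6 statements merged into one kernel-verified Lean document; each statement's English description precedes it below -/
import Mathlib

section
/- Let S be a well-ordered space, let I ⊆ S, let (I,<<) denote the set I equipped with the order topology of its inherited order, and let α : (I,<<) → S be the inclusion function. Then the following are equivalent: (1) α is continuous; (2) α is a topological embedding; (3) I is a closed subset of S or I is almost closed in S. -/
open Set Topology TopologicalSpace

universe u v w

/-- The order topology on `WithTop α`; for a noncompact well-ordered `α` with the order
topology, `WithTop α` with this topology is the one-point (Alexandroff) compactification
`α ∪ {∞_α}`, in which `⊤ = ∞_α` is the maximum. -/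
noncomputable instance withTopOrderTopology {α : Type*} [Preorder α] :
    TopologicalSpace (WithTop α) := Preorder.topology _

/-- `I` is almost closed in the ordered topological space `S`:
`closure I \ I = {ℓ}` where `ℓ = min {s ∈ S | I < s}`. -/
def AlmostClosedIn {S : Type*} [LinearOrder S] [TopologicalSpace S] (I : Set S) : Prop :=
  ∃ ℓ : S, closure I \ I = {ℓ} ∧ IsLeast {s : S | ∀ i ∈ I, i < s} ℓ

/-- `I ⊆ J` is almost closed in `J ∪ {∞_J}` (modeled as `WithTop J` with the order topology). -/
def AlmostClosed {J : Type*} [LinearOrder J] (I : Set J) : Prop :=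
  AlmostClosedIn ((fun j : J => (j : WithTop J)) '' I)

/-- A subset `C ⊆ X` is `J`-closed: for every almost closed `I ⊆ J` and continuous
`f : I ∪ {∞_I} → X` (where `I ∪ {∞_I} = WithTop ↥I` is the one-point compactification of
`I` with its internal order topology) with `f(I) ⊆ C` one has `f(∞_I) ∈ C`. -/
def JClosedSet (J : Type v) [LinearOrder J] (X : Type u) [TopologicalSpace X] (C : Set X) : Prop :=
  ∀ I : Set J, AlmostClosed I → ∀ f : WithTop ↥I → X, Continuous f →
    (∀ i : ↥I, f (WithTop.some i) ∈ C) → f ⊤ ∈ C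

/-- `U ⊆ X` is `J`-open iff its complement is `J`-closed. -/
def JOpenSet (J : Type v) [LinearOrder J] (X : Type u) [TopologicalSpace X] (U : Set X) : Prop :=
  JClosedSet J X Uᶜ

/-- `X` is a `J`-convergence space. -/
def IsJConvergence (J : Type v) [LinearOrder J] (X : Type u) [TopologicalSpace X] : Prop :=
  ∀ A : Set X, ¬ IsClosed A →
    ∃ I : Set J, AlmostClosed I ∧ ∃ f : WithTop ↥I → X, Continuous f ∧
      (∀ i : ↥I, f (WithTop.some i) ∈ A) ∧ f ⊤ ∉ A

/-- `JX`: the topology of `J`-open sets. -/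
noncomputable def jTop (J : Type v) [LinearOrder J] (X : Type u) [tX : TopologicalSpace X] :
    TopologicalSpace X := generateFrom {U : Set X | JOpenSet J X U}

/-- `K` is a compact Hausdorff witness for the failure of `A` to be closed. -/
def CGWitness (K : Type v) [tK : TopologicalSpace K] (X : Type u) [TopologicalSpace X]
    (A : Set X) : Prop :=
  CompactSpace K ∧ T2Space K ∧ ∃ f : K → X, Continuous f ∧ ¬ IsClosed (f ⁻¹' A)

/-- `X` is compactly generated. -/
def CompactlyGen.{v', u'} (X : Type u') [TopologicalSpace X] : Prop :=
  ∀ A : Set X, ¬ IsClosed A → ∃ (K : Type v') (tK : TopologicalSpace K), @CGWitness K tK X _ A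

/-- `kX`: `U` is open iff `f ⁻¹ U` is open for every continuous map from a compact
Hausdorff space. -/
def kTop.{v', u'} (X : Type u') [tX : TopologicalSpace X] : TopologicalSpace X :=
  generateFrom {U : Set X |
    ∀ (K : Type v') (tK : TopologicalSpace K), @CompactSpace K tK → @T2Space K tK →
      ∀ f : K → X, Continuous[tK, tX] f → IsOpen[tK] (f ⁻¹' U)}

/-- The directed topology on the successor `J' ∪ {∞} = WithTop J'`: generated by singletons
`{j}` and final segments `(j, ∞]` for `j ∈ J'`. -/
def directedTopology (J' : Type*) [Preorder J'] : TopologicalSpace (WithTop J') :=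
  generateFrom {s : Set (WithTop J') |
    (∃ j : J', s = {WithTop.some j}) ∨ ∃ j : J', s = Ioi (WithTop.some j)}

/-- `J'` witnesses transfinite convergence into `A`. -/
def TransfiniteWitness (J' : Type v) [LinearOrder J'] (X : Type u) [TopologicalSpace X]
    (A : Set X) : Prop :=
  WellFoundedLT J' ∧ Nonempty J' ∧ NoMaxOrder J' ∧
    ∃ f : WithTop J' → X, Continuous[directedTopology J', _] f ∧
      (∀ j : J', f (WithTop.some j) ∈ A) ∧ f ⊤ ∉ A

/-- `X` is a transfinite sequential space. -/
def TransfiniteSequential.{v', u'} (X : Type u') [TopologicalSpace X] : Prop :=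
  ∀ A : Set X, ¬ IsClosed A →
    ∃ (J' : Type v') (lo : LinearOrder J'), @TransfiniteWitness J' lo X _ A

/-- `X` is a `J`-unique convergence space. -/
def JUnique (J : Type v) [LinearOrder J] (X : Type u) [TopologicalSpace X] : Prop :=
  ∀ I : Set J, AlmostClosed I → ∀ f g : WithTop ↥I → X, Continuous f → Continuous g →
    (∀ i : ↥I, f (WithTop.some i) = g (WithTop.some i)) → f = g

/-- The set `M(X,Y)` of continuous maps between spaces with explicitly given topologies. -/
def Cts (X : Type u) (Y : Type w) (tX : TopologicalSpace X) (tY : TopologicalSpace Y) :=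
  {f : X → Y // Continuous[tX, tY] f}

/-- The `𝒥`-open topology on `M(X,Y)`, generated by the sets `W(t,U)`. -/
noncomputable def mjTop (J : Type v) [LinearOrder J] {X : Type u} {Y : Type w}
    (tX : TopologicalSpace X) (tY : TopologicalSpace Y) :
    TopologicalSpace (Cts X Y tX tY) :=
  generateFrom {W : Set (Cts X Y tX tY) |
    ∃ I : Set J, AlmostClosed I ∧ ∃ t : WithTop ↥I → X, Continuous[_, tX] t ∧
      ∃ U : Set Y, IsOpen[tY] U ∧ W = {f | ∀ z : WithTop ↥I, f.1 (t z) ∈ U}}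

/-!
In a well-order the subspace and order topologies on `I` can only differ at a point `m ∈ I` that
is a limit from below in the order of `I` but not in `S`; the supremum in `S` of `I ∩ Iio m` is
then a point of `closure I \ I` lying below `m`. So the inclusion is continuous exactly when
`closure I \ I` lies above all of `I`, which says that `I` is closed or almost closed, `ℓ` being
the only point of `closure I \ I`. As the subspace topology is always finer than the order
topology, continuity already makes the inclusion an embedding.
-/

section OrderTopology

variable {α : Type*} [LinearOrder α] [TopologicalSpace α] [OrderTopology α]

theorem isOpen_Ici_iff {a : α} : IsOpen (Ici a) ↔ ¬ Order.IsSuccLimit a := by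
  refine ⟨fun h hlim => ?_, fun h => ?_⟩
  · obtain ⟨b, hb⟩ := not_isMin_iff.1 hlim.not_isMin
    obtain ⟨l, hl, hIoc⟩ := exists_Ioc_subset_of_mem_nhds (h.mem_nhds self_mem_Ici) ⟨b, hb⟩
    obtain ⟨c, hca, hlc⟩ := hlim.lt_iff_exists_lt.1 hl
    exact (hIoc ⟨hlc, hca.le⟩).not_gt hca
  · rcases Order.not_isSuccLimit_iff.1 h with hmin | hpre
    · exact hmin.isBot.Ici_eq ▸ isOpen_univ
    · obtain ⟨b, hb⟩ := Order.not_isSuccPrelimit_iff.1 hpre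
      exact hb.Ioi_eq ▸ isOpen_Ioi

end OrderTopology

section Subspace

variable {S : Type*} [LinearOrder S] [TopologicalSpace S] [OrderTopology S] {I : Set S}

theorem isClosed_or_almostClosedIn_iff :
    IsClosed I ∨ AlmostClosedIn I ↔ closure I \ I ⊆ upperBounds I := by
  have le_of_mem_closure : ∀ x ∈ closure I, ∀ s ∈ upperBounds I, x ≤ s :=
    fun x hx s hs => (upperBounds_closure I ▸ hs) hx
  constructor
  · rintro (hcl | ⟨ℓ, hdiff, hleast⟩)
    · rw [hcl.closure_eq, sdiff_self]
      exact empty_subset _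
    · rw [hdiff, singleton_subset_iff]
      exact fun i hi => (hleast.1 i hi).le
  · intro h
    rcases (closure I \ I).eq_empty_or_nonempty with hempty | ⟨ℓ, hℓcl, hℓI⟩
    · exact .inl (closure_subset_iff_isClosed.1 (sdiff_eq_empty.1 hempty))
    have hℓ : ℓ ∈ upperBounds I := h ⟨hℓcl, hℓI⟩
    refine .inr ⟨ℓ,
      Subset.antisymm (fun x hx => ?_) (singleton_subset_iff.2 ⟨hℓcl, hℓI⟩),
      fun i hi => (hℓ hi).lt_of_ne fun e => hℓI (e ▸ hi),
      fun s hs => le_of_mem_closure ℓ hℓcl s fun i hi => (hs i hi).le⟩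
    exact le_antisymm (le_of_mem_closure x hx.1 ℓ hℓ) (le_of_mem_closure ℓ hℓcl x (h hx))

theorem isEmbedding_val_of_continuous
    (h : Continuous[Preorder.topology I, _] (Subtype.val : I → S)) :
    @IsEmbedding I S (Preorder.topology I) _ Subtype.val :=
  let := Preorder.topology I
  ⟨⟨le_antisymm (continuous_iff_le_induced.1 h)
    (induced_topology_le_preorder Subtype.coe_lt_coe)⟩,
    Subtype.val_injective⟩

variable [WellFoundedLT S]

theorem closure_diff_subset_upperBounds_of_continuous
    (h : Continuous[Preorder.topology I, _] (Subtype.val : I → S)) :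
    closure I \ I ⊆ upperBounds I := by
  let := Preorder.topology I
  have : OrderTopology I := ⟨rfl⟩
  rintro x ⟨hxcl, hxI⟩ i hi
  by_contra! hxi
  have hU : IsUpperSet (Subtype.val ⁻¹' Ioi x : Set I) :=
    (isUpperSet_Ioi _).preimage (Subtype.mono_coe _)
  obtain hempty | ⟨m, hm⟩ := hU.eq_empty_or_Ici
  · exact hempty.subset (show (⟨i, hi⟩ : I) ∈ Subtype.val ⁻¹' Ioi x from hxi)
  have hxm : x < m := show m ∈ Subtype.val ⁻¹' Ioi x from hm ▸ self_mem_Ici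
  have hbelow : ∀ j : I, j < m → (j : S) < x := fun j hjm =>
    (not_lt.1 fun hxj => (hm ▸ hxj : j ∈ Ici m).not_gt hjm).lt_of_ne fun e => hxI (e ▸ j.2)
  obtain ⟨j, hjm, hjI⟩ := mem_closure_iff.1 hxcl (Iio m) isOpen_Iio hxm
  have hm_open : IsOpen (Ici m) := hm ▸ isOpen_Ioi.preimage h
  rw [isOpen_Ici_iff, Order.not_isSuccLimit_iff] at hm_open
  rcases hm_open with hmin | hpre
  · exact hmin.not_lt (show (⟨j, hjI⟩ : I) < m from hjm)
  obtain ⟨b, hb⟩ := Order.not_isSuccPrelimit_iff.1 hpre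
  obtain ⟨k, ⟨hbk, hkm⟩, hkI⟩ :=
    mem_closure_iff.1 hxcl (Ioo b m) isOpen_Ioo ⟨hbelow b hb.lt, hxm⟩
  exact hb.2 (show b < ⟨k, hkI⟩ from hbk) hkm

theorem isOpen_val_preimage_Ioi (hI : closure I \ I ⊆ upperBounds I) (a : S) :
    IsOpen[Preorder.topology I] (Subtype.val ⁻¹' Ioi a : Set I) := by
  let := Preorder.topology I
  have : OrderTopology I := ⟨rfl⟩
  have hU : IsUpperSet (Subtype.val ⁻¹' Ioi a : Set I) :=
    (isUpperSet_Ioi _).preimage (Subtype.mono_coe _)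
  obtain hempty | ⟨m, hm⟩ := hU.eq_empty_or_Ici
  · exact hempty ▸ isOpen_empty
  rw [hm, isOpen_Ici_iff]
  intro hlim
  have ham : a < m := show m ∈ Subtype.val ⁻¹' Ioi a from hm ▸ self_mem_Ici
  set L : Set S := Subtype.val '' Iio m
  have haL : a ∈ upperBounds L := by
    rintro _ ⟨j, hjm, rfl⟩
    exact not_lt.1 fun haj => (hm ▸ haj : j ∈ Ici m).not_gt hjm
  obtain ⟨j₀, hj₀⟩ := not_isMin_iff.1 hlim.not_isMin
  have hLne : L.Nonempty := ⟨j₀, j₀, hj₀, rfl⟩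
  have hub : (upperBounds L).Nonempty := ⟨a, haL⟩
  set ℓ := wellFounded_lt.min _ hub
  have hℓ : IsLUB L ℓ :=
    ⟨wellFounded_lt.min_mem _ hub, fun _ hs => wellFounded_lt.min_le hs⟩
  have hℓm : ℓ < m := (hℓ.2 haL).trans_lt ham
  have hℓcl : ℓ ∈ closure I := closure_mono (image_subset_range _ _ |>.trans
    Subtype.range_coe.subset) (hℓ.mem_closure hLne)
  by_cases hℓI : ℓ ∈ I
  · obtain ⟨c, hcm, hℓc⟩ :=
      hlim.lt_iff_exists_lt.1 (show (⟨ℓ, hℓI⟩ : I) < m from hℓm)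
    exact (hℓ.1 ⟨c, hcm, rfl⟩).not_gt hℓc
  · exact (hI ⟨hℓcl, hℓI⟩ m.2).not_gt hℓm

theorem continuous_val_of_closure_diff_subset_upperBounds (hI : closure I \ I ⊆ upperBounds I) :
    Continuous[Preorder.topology I, _] (Subtype.val : I → S) := by
  let := Preorder.topology I
  have : OrderTopology I := ⟨rfl⟩
  exact OrderTopology.continuous_iff.2 fun a =>
    ⟨isOpen_val_preimage_Ioi hI a, ((isLowerSet_Iio a).preimage (Subtype.mono_coe _)).isOpen⟩

theorem continuous_val_iff :
    Continuous[Preorder.topology I, _] (Subtype.val : I → S) ↔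
      closure I \ I ⊆ upperBounds I :=
  ⟨closure_diff_subset_upperBounds_of_continuous,
    continuous_val_of_closure_diff_subset_upperBounds⟩

end Subspace

theorem stmt0 {S : Type u} [LinearOrder S] [WellFoundedLT S] [TopologicalSpace S]
    [OrderTopology S] (I : Set S) :
    List.TFAE
      [@Continuous ↥I S (Preorder.topology ↥I) _ Subtype.val,
       @IsEmbedding ↥I S (Preorder.topology ↥I) _ Subtype.val,
       IsClosed I ∨ AlmostClosedIn I] := by
  tfae_have 1 ↔ 3 := continuous_val_iff.trans isClosed_or_almostClosedIn_iff.symm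
  tfae_have 1 → 2 := isEmbedding_val_of_continuous
  tfae_have 2 → 1 := fun h =>
    let := Preorder.topology I
    h.continuous
  tfae_finish
end

section
/- Suppose S is a well-ordered space and I ⊆ S is almost closed in S, with cl(I) = I ∪ {ℓ} (closure taken in S, given the subspace topology). Let (I,<<) denote I with the order topology of its inherited order, and let I ∪ {∞_I} denote the one-point (Alexandroff) compactification of (I,<<). Then (I,<<) is non-compact, and the map h : I ∪ {∞_I} → cl(I) defined by h(i) = i for i ∈ I and h(∞_I) = ℓ is a homeomorphism. -/
open Set Topology TopologicalSpace

universe u v w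

/-!
Let `ℓ = sup I`. Every nonempty subset of `I` bounded above inside `I` has its supremum in
`closure I \ {ℓ} = I`, so the inclusion of `(I, <<)` into `S` is continuous. Initial segments
`Iic i` of the well-order `(I, <<)` are compact, hence `i → ℓ` along the cocompact filter of `I`,
and `i ↦ i`, `∞ ↦ ℓ` is a continuous bijection from the compact space `I ∪ {∞_I}` onto the
Hausdorff space `cl(I)`. Finally `I` is not compact, for otherwise its image would be closed in `S`.
-/

open Filter Function

section OrderTopologySubtype

variable {S : Type*} [LinearOrder S] [TopologicalSpace S] [OrderTopology S] {I : Set S}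

theorem continuous_subtype_val_orderTopology
    (hsup : ∀ T ⊆ I, T.Nonempty → ∀ b ∈ I, b ∈ upperBounds T → ∃ s ∈ I, IsLUB T s)
    (hinf : ∀ T ⊆ I, T.Nonempty → ∀ b ∈ I, b ∈ lowerBounds T → ∃ s ∈ I, IsGLB T s) :
    Continuous[Preorder.topology I, _] ((↑) : I → S) := by
  let := Preorder.topology I
  have : OrderTopology I := ⟨rfl⟩
  refine OrderTopology.continuous_iff.2 fun a =>
    ⟨isOpen_iff_mem_nhds.2 fun i (hai : a < i) => ?_,
      isOpen_iff_mem_nhds.2 fun i (hia : i < a) => ?_⟩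
  · obtain hT | hT := {x ∈ I | x ≤ a}.eq_empty_or_nonempty
    · exact univ_mem' fun j => not_le.1 fun hja => eq_empty_iff_forall_notMem.1 hT _ ⟨j.2, hja⟩
    obtain ⟨s, hsI, hs⟩ := hsup _ (sep_subset _ _) hT i i.2 fun x hx => hx.2.trans hai.le
    have hsi : (⟨s, hsI⟩ : I) < i := (hs.2 fun x hx => hx.2).trans_lt hai
    filter_upwards [Ioi_mem_nhds hsi] with j (hsj : s < j)
    exact not_le.1 fun hja => hsj.not_ge (hs.1 ⟨j.2, hja⟩)
  · obtain hT | hT := {x ∈ I | a ≤ x}.eq_empty_or_nonempty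
    · exact univ_mem' fun j => not_le.1 fun hja => eq_empty_iff_forall_notMem.1 hT _ ⟨j.2, hja⟩
    obtain ⟨s, hsI, hs⟩ := hinf _ (sep_subset _ _) hT i i.2 fun x hx => hia.le.trans hx.2
    have his : i < (⟨s, hsI⟩ : I) := hia.trans_le (hs.2 fun x hx => hx.2)
    filter_upwards [Iio_mem_nhds his] with j (hjs : j < s)
    exact not_le.1 fun haj => hjs.not_ge (hs.1 ⟨j.2, haj⟩)

end OrderTopologySubtype

section WellOrder

variable {α : Type*} [LinearOrder α] [WellFoundedLT α]

theorem WellFoundedLT.exists_isLeast {s : Set α} (hs : s.Nonempty) : ∃ a, IsLeast s a :=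
  ⟨_, wellFounded_lt.min_mem s hs, fun _ hx => wellFounded_lt.min_le hx⟩

variable [TopologicalSpace α] [OrderTopology α]

instance WellFoundedLT.compactIccSpace : CompactIccSpace α where
  isCompact_Icc {a b} := by
    have : Nonempty α := ⟨a⟩
    let := WellFoundedLT.toOrderBot α
    let := WellFoundedLT.conditionallyCompleteLinearOrderBot α
    exact ConditionallyCompleteLinearOrder.isCompact_Icc a b

theorem WellFoundedLT.cocompact_le_atTop : cocompact α ≤ atTop := by
  rcases isEmpty_or_nonempty α with _ | _
  · simp only [filter_eq_bot_of_isEmpty, le_refl]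
  · let := WellFoundedLT.toOrderBot α
    exact _root_.cocompact_le_atTop

end WellOrder

theorem mem_iff_ne_of_closure_diff_eq {X : Type*} [TopologicalSpace X] {I : Set X} {ℓ x : X}
    (h : closure I \ I = {ℓ}) (hx : x ∈ closure I) : x ∈ I ↔ x ≠ ℓ := by
  rw [← not_iff_not, not_not, ← mem_singleton_iff, ← h, Set.mem_sdiff, and_iff_right hx]

theorem exists_isLUB_mem_of_closure_diff_eq {S : Type*} [LinearOrder S] [WellFoundedLT S]
    [TopologicalSpace S] [OrderTopology S] {I T : Set S} {ℓ b : S} (h : closure I \ I = {ℓ})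
    (hlt : ∀ i ∈ I, i < ℓ) (hT : T ⊆ I) (hne : T.Nonempty) (hb : b ∈ I)
    (hbT : b ∈ upperBounds T) : ∃ s ∈ I, IsLUB T s := by
  obtain ⟨s, hs⟩ : ∃ s, IsLUB T s := WellFoundedLT.exists_isLeast ⟨b, hbT⟩
  have hsI : s ∈ closure I := closure_mono hT (hs.mem_closure hne)
  exact ⟨s, (mem_iff_ne_of_closure_diff_eq h hsI).2 ((hs.2 hbT).trans_lt (hlt b hb)).ne, hs⟩

namespace OnePoint

variable {X Y : Type*}

theorem bijective_elim {y : Y} {f : X → Y} (hinj : Injective f) (hy : range f = {y}ᶜ) :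
    Bijective fun p : OnePoint X => p.elim y f := by
  have hfy : ∀ x, f x ≠ y := fun x => (hy ▸ mem_range_self x : f x ∈ ({y}ᶜ : Set Y))
  refine ⟨?_, fun q => ?_⟩
  · rintro (_ | a) (_ | b) hab
    exacts [rfl, (hfy b hab.symm).elim, (hfy a hab).elim, congrArg some (hinj hab)]
  · by_cases hq : q = y
    · exact ⟨∞, hq.symm⟩
    · obtain ⟨x, rfl⟩ : q ∈ range f := hy ▸ hq
      exact ⟨x, rfl⟩

variable [TopologicalSpace X] [TopologicalSpace Y] [T2Space Y]

/-- Unlike `OnePoint.equivOfIsEmbeddingOfRangeEq`, `f` need only be continuous: since `OnePoint X`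
is compact, the continuous bijection it induces onto the Hausdorff space `Y` is a homeomorphism. -/
noncomputable def homeomorphOfTendsto (y : Y) (f : X → Y) (hf : Continuous f)
    (hinj : Injective f) (hy : range f = {y}ᶜ) (hlim : Tendsto f (coclosedCompact X) (𝓝 y)) :
    OnePoint X ≃ₜ Y :=
  Continuous.homeoOfEquivCompactToT2 (f := Equiv.ofBijective _ (bijective_elim hinj hy))
    ((continuous_iff _).2 ⟨hlim, hf⟩)

end OnePoint

theorem stmt1 {S : Type u} [LinearOrder S] [WellFoundedLT S] [TopologicalSpace S]
    [OrderTopology S] (I : Set S) (ℓ : S) (h1 : closure I \ I = {ℓ})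
    (h2 : IsLeast {s : S | ∀ i ∈ I, i < s} ℓ) :
    letI tI : TopologicalSpace ↥I := Preorder.topology ↥I
    ¬ CompactSpace ↥I ∧
      ∃ h : Homeomorph (OnePoint ↥I) ↥(closure I),
        (∀ i : ↥I, ((h.toEquiv (OnePoint.some i) : ↥(closure I)) : S) = (i : S)) ∧
          ((h.toEquiv OnePoint.infty : ↥(closure I)) : S) = ℓ := by
  let := Preorder.topology I
  have : OrderTopology I := ⟨rfl⟩
  have hℓ : ℓ ∈ closure I \ I := h1 ▸ rfl
  have hval : Continuous ((↑) : I → S) :=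
    continuous_subtype_val_orderTopology
      (fun _ hT hne _ hb hbT => exists_isLUB_mem_of_closure_diff_eq h1 h2.1 hT hne hb hbT)
      fun _ hT hne _ _ _ => (WellFoundedLT.exists_isLeast hne).imp fun _ ht => ⟨hT ht.1, ht.isGLB⟩
  have hlim : Tendsto ((↑) : I → S) (coclosedCompact I) (𝓝 ℓ) := by
    refine (tendsto_atTop_isLUB (Subtype.mono_coe _) ?_).mono_left
      (coclosedCompact_eq_cocompact (X := I) ▸ WellFoundedLT.cocompact_le_atTop)
    rw [Subtype.range_coe]
    exact isLUB_of_mem_closure (fun i hi => (h2.1 i hi).le) hℓ.1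
  refine ⟨fun _ => hℓ.2 ?_, OnePoint.homeomorphOfTendsto ⟨ℓ, hℓ.1⟩
    (fun i => ⟨i, subset_closure i.2⟩) (hval.subtype_mk _)
    (fun _ _ hij => Subtype.ext (congrArg Subtype.val hij :)) ?_ (tendsto_subtype_rng.2 hlim),
    fun _ => rfl, rfl⟩
  · have hI : IsClosed I := by simpa using (isCompact_range hval).isClosed
    exact hI.closure_subset hℓ.1
  · ext ⟨x, hx⟩
    simp [Subtype.ext_iff, mem_iff_ne_of_closure_diff_eq h1 hx]
end

section
/- Let J be a non-compact well-ordered space. If K ⊆ J is almost closed in J ∪ {∞_J} and L ⊆ K is almost closed in K ∪ {∞_K} (identifying K ∪ {∞_K} with the closure of K in J ∪ {∞_J}), then L is almost closed in J ∪ {∞_J}. -/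
open Set Topology TopologicalSpace

universe u v w

/-! Since the closure `S` of `K` is closed in `J ∪ {∞_J}`, closures of subsets of `S` taken in `S`
are the closures taken in `J ∪ {∞_J}`, so `cl(L) \ L = {ℓ}` holds verbatim there. The point `ℓ`
is a strict upper bound of `L` lying in the closure of `L`, hence below every strict upper bound
of `L` in `J ∪ {∞_J}`. -/

instance WithTop.instOrderTopology {α : Type*} [LinearOrder α] : OrderTopology (WithTop α) :=
  ⟨rfl⟩

theorem AlmostClosedIn.of_subtype {X : Type*} [LinearOrder X] [TopologicalSpace X]
    [ClosedIicTopology X] {S L : Set X} (hS : IsClosed S) (hLS : L ⊆ S)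
    (hL : AlmostClosedIn {x : S | (x : X) ∈ L}) : AlmostClosedIn L := by
  set P : Set S := {x | (x : X) ∈ L}
  obtain ⟨m, hdiff, hm_bound, -⟩ := hL
  have himage : ((↑) : S → X) '' P = L := by
    rw [show P = (↑) ⁻¹' L from rfl, Subtype.image_preimage_coe, inter_eq_right.mpr hLS]
  have hclosure : closure L = ((↑) : S → X) '' closure P := by
    rw [← hS.isClosedEmbedding_subtypeVal.closure_image_eq, himage]
  have hdiff' : closure L \ L = {(m : X)} := calc
    closure L \ L = ((↑) : S → X) '' closure P \ (↑) '' P := by rw [hclosure, himage]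
    _ = (↑) '' (closure P \ P) := (image_sdiff Subtype.val_injective _ _).symm
    _ = {(m : X)} := by rw [hdiff, image_singleton]
  have hm_closure : (m : X) ∈ closure L := (hdiff'.symm.subset rfl).1
  refine ⟨m, hdiff', fun i hi => hm_bound ⟨i, hLS hi⟩ hi, fun s hs => ?_⟩
  exact closure_minimal (fun i hi => (hs i hi).le) isClosed_Iic hm_closure

theorem stmt2_general {J : Type v} [LinearOrder J] (K L : Set J) (hLK : L ⊆ K)
    (hL : AlmostClosedIn {x : ↥(closure ((fun j : J => (j : WithTop J)) '' K)) |
      (x : WithTop J) ∈ (fun j : J => (j : WithTop J)) '' L}) :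
    AlmostClosed L :=
  AlmostClosedIn.of_subtype isClosed_closure ((image_mono hLK).trans subset_closure) hL

theorem stmt2 {J : Type v} [LinearOrder J] [WellFoundedLT J] [TopologicalSpace J]
    [OrderTopology J] [NoncompactSpace J] (K L : Set J) (hLK : L ⊆ K)
    (hK : AlmostClosed K)
    (hL : AlmostClosedIn {x : ↥(closure ((fun j : J => (j : WithTop J)) '' K)) |
      (x : WithTop J) ∈ (fun j : J => (j : WithTop J)) '' L}) :
    AlmostClosed L :=
  stmt2_general K L hLK hL
end

section
/- Suppose J is a non-compact well-ordered space, X is a topological space, and f : J → X is a (not necessarily continuous) function such that for every j ∈ J the fiber f⁻¹(f(j)) is bounded in J (i.e. has an upper bound in J). Then there exists a closed cofinal (unbounded) subset I ⊆ J such that the restriction f|_I is injective. In particular, if f is continuous then f|_I is continuous. -/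
/-!
Choose `g : J → J` with `j < g j` and the whole fiber of `f j` below `g j`; this is possible since
`J` has no maximum (it would make `J` compact). Build `I` by transfinite recursion, putting `j`
into `I` exactly when `j` is the supremum of `g` over the earlier points of `I`. Two points `i < j`
of `I` then satisfy `g i ≤ j`, so `j` lies outside the fiber of `f i`. A point of the closure
of `I` is approached from below by points of `I`, which forces it to be such a supremum, so `I`
is closed. If `I` were bounded, the supremum of `g` over all of `I` would again lie in `I`, and
be exceeded by its own `g`-value.
-/

open Set Topology TopologicalSpace

universe u v w

section WellOrder

variable {α : Type*} [LinearOrder α] [WellFoundedLT α]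

theorem BddAbove.exists_isLUB_of_wellFoundedLT {s : Set α} (hs : BddAbove s) :
    ∃ x, IsLUB s x := by
  obtain ⟨x, hx, hmin⟩ := wellFounded_lt.has_min _ hs
  exact ⟨x, hx, fun y hy => not_lt.1 (hmin y hy)⟩

theorem inter_Ioc_nonempty_of_mem_closure [TopologicalSpace α] [OrderTopology α]
    {s : Set α} {x l : α} (hx : x ∈ closure s) (hl : l < x) : (s ∩ Ioc l x).Nonempty := by
  let := SuccOrder.ofLinearWellFoundedLT α
  rw [inter_comm]
  exact (mem_closure_iff_nhds_basis' (SuccOrder.hasBasis_nhds_Ioc_of_exists_lt ⟨l, hl⟩)).1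
    hx l hl

theorem noMaxOrder_of_noncompactSpace [TopologicalSpace α] [OrderTopology α]
    [NoncompactSpace α] : NoMaxOrder α := by
  refine ⟨fun a => ?_⟩
  by_contra! h
  have : Nonempty α := ⟨a⟩
  let := WellFoundedLT.toOrderBot α
  let := WellFoundedLT.conditionallyCompleteLinearOrderBot α
  have huniv : Icc ⊥ a = univ := eq_univ_of_forall fun b => ⟨bot_le, h b⟩
  exact noncompact_univ α (huniv ▸ isCompact_Icc)

end WellOrder

section SupIterates

variable {α : Type*} [LinearOrder α] [WellFoundedLT α] {g : α → α}

/-- The points `a₀ = ⊥`, `a_γ = sup_{β < γ} g a_β` (while these suprema exist), defined by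
recursion on the point rather than on the index `γ`. -/
def supIterates (g : α → α) : Set α :=
  {j | wellFounded_lt.fix (C := fun _ => Prop)
    (fun j rec => IsLUB (g '' {i | ∃ h : i < j, rec i h}) j) j}

theorem mem_supIterates_iff {j : α} :
    j ∈ supIterates g ↔ IsLUB (g '' (supIterates g ∩ Iio j)) j := by
  rw [supIterates, mem_ofPred_eq, WellFounded.fix_eq]
  congr! 2
  ext i
  exact ⟨fun ⟨h, hi⟩ => ⟨hi, h⟩, fun ⟨hi, h⟩ => ⟨h, hi⟩⟩

theorem le_of_mem_supIterates {i j : α} (hi : i ∈ supIterates g) (hj : j ∈ supIterates g)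
    (hij : i < j) : g i ≤ j :=
  (mem_supIterates_iff.1 hj).1 (mem_image_of_mem g ⟨hi, hij⟩)

theorem injOn_supIterates {β : Type*} {f : α → β} (hfg : ∀ a, f ⁻¹' {f a} ⊆ Iio (g a)) :
    InjOn f (supIterates g) := by
  intro a ha b hb hab
  by_contra hne
  rcases lt_or_gt_of_ne hne with h | h
  · exact (le_of_mem_supIterates ha hb h).not_gt (hfg a hab.symm)
  · exact (le_of_mem_supIterates hb ha h).not_gt (hfg b hab)

theorem isClosed_supIterates [TopologicalSpace α] [OrderTopology α] (hg : ∀ j, j < g j) :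
    IsClosed (supIterates g) := by
  refine closure_subset_iff_isClosed.1 fun x hx => ?_
  by_cases hxS : x ∈ supIterates g
  · exact hxS
  refine mem_supIterates_iff.2 ⟨?_, fun k hk => not_lt.1 fun hkx => ?_⟩
  · rintro _ ⟨i, ⟨hi, hix⟩, rfl⟩
    obtain ⟨y, hy, hiy, hyx⟩ := inter_Ioc_nonempty_of_mem_closure hx hix
    exact (le_of_mem_supIterates hi hy hiy).trans hyx
  · obtain ⟨y, hy, hky, hyx⟩ := inter_Ioc_nonempty_of_mem_closure hx hkx
    have hy_lt : y < x := hyx.lt_of_ne (ne_of_mem_of_not_mem hy hxS)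
    exact (hky.trans (hg y)).not_ge (hk (mem_image_of_mem g ⟨hy, hy_lt⟩))

theorem bddAbove_image_supIterates (hg : ∀ j, j < g j) (hS : BddAbove (supIterates g)) :
    BddAbove (g '' supIterates g) := by
  by_cases hmax : ∃ m, IsGreatest (supIterates g) m
  · obtain ⟨m, hm, hmax⟩ := hmax
    refine ⟨g m, ?_⟩
    rintro _ ⟨i, hi, rfl⟩
    rcases (hmax hi).lt_or_eq with him | rfl
    · exact (le_of_mem_supIterates hi hm him).trans (hg m).le
    · exact le_rfl
  · obtain ⟨b, hb⟩ := hS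
    refine ⟨b, ?_⟩
    rintro _ ⟨i, hi, rfl⟩
    obtain ⟨i', hi', hii'⟩ : ∃ i' ∈ supIterates g, i < i' := by
      by_contra! h
      exact hmax ⟨i, hi, h⟩
    exact (le_of_mem_supIterates hi hi' hii').trans (hb hi')

theorem not_bddAbove_supIterates (hg : ∀ j, j < g j) : ¬ BddAbove (supIterates g) := by
  intro hS
  obtain ⟨j, hj⟩ := (bddAbove_image_supIterates hg hS).exists_isLUB_of_wellFoundedLT
  have hjS : j ∈ supIterates g := by
    refine mem_supIterates_iff.2 ⟨upperBounds_mono_set (image_mono inter_subset_left) hj.1,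
      fun k hk => not_lt.1 fun hkj => ?_⟩
    obtain ⟨_, ⟨i, hi, rfl⟩, hki, hij⟩ := hj.exists_between hkj
    exact hki.not_ge (hk (mem_image_of_mem g ⟨hi, (hg i).trans_le hij⟩))
  exact (hg j).not_ge (hj.1 (mem_image_of_mem g hjS))

end SupIterates

theorem exists_lt_apply_and_fiber_subset_Iio {α β : Type*} [LinearOrder α] [NoMaxOrder α]
    {f : α → β} (hf : ∀ j, BddAbove (f ⁻¹' {f j})) :
    ∃ g : α → α, (∀ j, j < g j) ∧ ∀ j, f ⁻¹' {f j} ⊆ Iio (g j) := by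
  have h : ∀ j, ∃ m, j < m ∧ f ⁻¹' {f j} ⊆ Iio m := fun j => by
    obtain ⟨u, hu⟩ := (hf j).insert j
    obtain ⟨m, hum⟩ := exists_gt u
    exact ⟨m, (hu (mem_insert j _)).trans_lt hum,
      fun x hx => (hu (mem_insert_of_mem j hx)).trans_lt hum⟩
  choose g hg_gt hg_fiber using h
  exact ⟨g, hg_gt, hg_fiber⟩

theorem stmt4 {J : Type v} [LinearOrder J] [WellFoundedLT J] [TopologicalSpace J]
    [OrderTopology J] [NoncompactSpace J] {X : Type u} [TopologicalSpace X]
    (f : J → X) (hf : ∀ j : J, BddAbove (f ⁻¹' {f j})) :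
    ∃ I : Set J, IsClosed I ∧ ¬ BddAbove I ∧ Set.InjOn f I ∧
      (Continuous f → Continuous (I.restrict f)) := by
  have := noMaxOrder_of_noncompactSpace (α := J)
  obtain ⟨g, hg_gt, hg_fiber⟩ := exists_lt_apply_and_fiber_subset_Iio hf
  exact ⟨supIterates g, isClosed_supIterates hg_gt, not_bddAbove_supIterates hg_gt,
    injOn_supIterates hg_fiber, fun hc => hc.comp continuous_subtype_val⟩
end

section
/- Suppose K is a compact well-ordered space with minimal element 0, (M,m) ∈ K × K, and B ⊆ [0,M] × [0,m] is a subset (where [0,M] × [0,m] carries the product of the subspace topologies) such that: for all k < M, the set ([0,k] × [0,m]) ∩ B is closed in [0,M] × [0,m]; ({M} × [0,m]) ∩ B = ∅; and ([0,M] × {m}) ∩ B = ∅. If (M,m) lies in cl(B) \ B, then there exist a limit point l of [0,M] and a continuous map f : [0,l] → [0,M] × [0,m] such that f([0,l)) ⊆ B and f(l) = (M,m). -/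
open Set Topology TopologicalSpace

universe u v w

/-!
Build a path in `K × K` by transfinite recursion. At a limit stage take the supremum of the earlier
points: while its first coordinate is below `M` it stays in `B`, because `B` is closed in every
strip `[0, k] × [0, m]`. At any other stage use that `(M, m)` is in the closure of `B` to pick a
point of `B` strictly to the right and strictly above every point of `B` over the current first
coordinate; by compactness of the strip those heights stay below `m`. The first coordinate
increases strictly, so the path must leave `B`; the first stage where it does is a limit, where
the value is the supremum `(M, m)`, the heights having been forced up to `m`. A monotone path
that takes suprema at limits is continuous.
-/

open Order Filter

theorem MonotoneOn.continuousOn_Iic_of_isLUB {α β : Type*} [LinearOrder α] [WellFoundedLT α]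
    [TopologicalSpace α] [OrderTopology α] [ConditionallyCompleteLinearOrder β]
    [TopologicalSpace β] [OrderTopology β] {f : α → β} {l : α} (hf : MonotoneOn f (Iic l))
    (hlim : ∀ x ≤ l, IsSuccLimit x → IsLUB (f '' Iio x) (f x)) : ContinuousOn f (Iic l) := by
  let := SuccOrder.ofLinearWellFoundedLT α
  intro x hxl
  have hleft : ContinuousWithinAt f (Iio x) x := by
    by_cases hx : IsSuccLimit x
    · have hlub := hlim x hxl hx
      have hmono : MonotoneOn f (Iio x) := hf.mono fun y hy ↦ hy.le.trans hxl
      rw [ContinuousWithinAt, ← hlub.csSup_eq ((Iio_nonempty.2 hx.not_isMin).image f)]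
      exact hmono.tendsto_nhdsLT hlub.bddAbove
    · have hbot : 𝓝[<] x = ⊥ := nhdsLT_eq_bot_iff.2 <|
        (not_isSuccLimit_iff.1 hx).imp isBot_iff_isMin.2 not_isSuccPrelimit_iff.1
      rw [ContinuousWithinAt, hbot]
      exact tendsto_bot
  have hnhds : 𝓝 x = 𝓝[≤] x := by rw [← nhdsLE_sup_nhdsGT, SuccOrder.nhdsGT, sup_bot_eq]
  exact (continuousWithinAt_Iio_iff_Iic.1 hleft).mono_left (nhdsWithin_le_nhds.trans hnhds.le)

theorem bddAbove_of_compactSpace {α : Type*} [LinearOrder α] [TopologicalSpace α]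
    [ClosedIciTopology α] [CompactSpace α] [Nonempty α] (s : Set α) : BddAbove s :=
  isCompact_univ.bddAbove.mono (subset_univ s)

theorem exists_mem_lt_fst_lt_snd_of_mem_closure {α β : Type*} [LinearOrder α] [TopologicalSpace α]
    [OrderTopology α] [LinearOrder β] [TopologicalSpace β] [OrderTopology β] {B : Set (α × β)}
    {a a' : α} {b b' : β} (hB : (a', b') ∈ closure B) (ha : a < a') (hb : b < b') :
    ∃ q ∈ B, a < q.1 ∧ b < q.2 := by
  obtain ⟨q, hq, hqB⟩ := mem_closure_iff.1 hB _ (isOpen_Ioi.prod isOpen_Ioi) ⟨ha, hb⟩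
  exact ⟨q, hqB, hq⟩

section Construction

variable {K : Type*} [ConditionallyCompleteLinearOrderBot K] {B : Set (K × K)} {M m : K}

noncomputable def maxHeight (B : Set (K × K)) (k : K) : K :=
  sSup (Prod.snd '' {p ∈ B | p.1 ≤ k})

-- The fallback `(M, m)` lies outside `B`, so it marks the stage where the path leaves `B`.
open scoped Classical in
noncomputable def nextPoint (B : Set (K × K)) (M m : K) (s : K × K) : K × K :=
  if h : ∃ q ∈ B, s.1 < q.1 ∧ maxHeight B s.1 < q.2 then h.choose else (M, m)

theorem nextPoint_mem {s : K × K} (h : ∃ q ∈ B, s.1 < q.1 ∧ maxHeight B s.1 < q.2) :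
    nextPoint B M m s ∈ B := by
  rw [nextPoint, dif_pos h]
  exact h.choose_spec.1

theorem nextPoint_eq_or (s : K × K) : nextPoint B M m s = (M, m) ∨
    nextPoint B M m s ∈ B ∧ s.1 < (nextPoint B M m s).1 ∧
      maxHeight B s.1 < (nextPoint B M m s).2 := by
  unfold nextPoint
  split_ifs with h
  · exact .inr h.choose_spec
  · exact .inl rfl

variable [WellFoundedLT K]

open scoped Classical in
noncomputable def stairPath (B : Set (K × K)) (M m : K) : K → K × K :=
  wellFounded_lt.fix fun x f ↦
    if IsSuccLimit x then ⨆ y : Iio x, f y y.2 else nextPoint B M m (⨆ y : Iio x, f y y.2)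

theorem stairPath_of_isSuccLimit {x : K} (hx : IsSuccLimit x) :
    stairPath B M m x = ⨆ y : Iio x, stairPath B M m y := by
  rw [stairPath, WellFounded.fix_eq, if_pos hx]

theorem stairPath_of_not_isSuccLimit {x : K} (hx : ¬IsSuccLimit x) :
    stairPath B M m x = nextPoint B M m (⨆ y : Iio x, stairPath B M m y) := by
  rw [stairPath, WellFounded.fix_eq, if_neg hx]

end Construction

section Properties

variable {K : Type*} [ConditionallyCompleteLinearOrderBot K] [TopologicalSpace K] [OrderTopology K]
  [CompactSpace K] {B : Set (K × K)} {M m : K}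

theorem snd_le_maxHeight {p : K × K} {k : K} (hp : p ∈ B) (hk : p.1 ≤ k) :
    p.2 ≤ maxHeight B k :=
  le_csSup (bddAbove_of_compactSpace _) ⟨p, ⟨hp, hk⟩, rfl⟩

theorem maxHeight_lt {k : K} (hB : ∀ p ∈ B, p.2 < m) (hm : ⊥ < m)
    (hk : IsClosed {p ∈ B | p.1 ≤ k}) : maxHeight B k < m := by
  rcases eq_empty_or_nonempty {p ∈ B | p.1 ≤ k} with h | h
  · simpa [maxHeight, h] using hm
  · exact (hk.isCompact.sSup_lt_iff_of_continuous h continuous_snd.continuousOn m).2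
      fun p hp ↦ hB p hp.1

theorem exists_lt_fst_maxHeight_lt_snd (hB : B ⊆ Iio M ×ˢ Iio m)
    (hclosed : ∀ k < M, IsClosed {p ∈ B | p.1 ≤ k}) (hMm : (M, m) ∈ closure B) {k : K}
    (hk : k < M) : ∃ q ∈ B, k < q.1 ∧ maxHeight B k < q.2 := by
  obtain ⟨p, hp⟩ := closure_nonempty_iff.1 ⟨_, hMm⟩
  have hm : ⊥ < m := bot_le.trans_lt (hB hp).2
  exact exists_mem_lt_fst_lt_snd_of_mem_closure hMm hk
    (maxHeight_lt (fun q hq ↦ (hB hq).2) hm (hclosed k hk))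

variable [WellFoundedLT K]

theorem le_fst_iSup_stairPath {x y : K} (hy : y < x) :
    (stairPath B M m y).1 ≤ (⨆ z : Iio x, stairPath B M m z).1 := by
  rw [Prod.fst_iSup]
  exact le_ciSup (f := fun z : Iio x ↦ (stairPath B M m z).1) (bddAbove_of_compactSpace _) ⟨y, hy⟩

theorem le_snd_iSup_stairPath {x y : K} (hy : y < x) :
    (stairPath B M m y).2 ≤ (⨆ z : Iio x, stairPath B M m z).2 := by
  rw [Prod.snd_iSup]
  exact le_ciSup (f := fun z : Iio x ↦ (stairPath B M m z).2) (bddAbove_of_compactSpace _) ⟨y, hy⟩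

attribute [local instance] SuccOrder.ofLinearWellFoundedLT

theorem stairPath_fst_lt_and_snd_le (hB : B ⊆ Iio M ×ˢ Iio m) {x : K}
    (hx : ∀ y < x, stairPath B M m y ∈ B) {y : K} (hy : y < x) :
    (stairPath B M m y).1 < (stairPath B M m x).1 ∧
      (stairPath B M m y).2 ≤ (stairPath B M m x).2 := by
  induction x using WellFoundedLT.induction generalizing y with
  | _ x ih =>
  by_cases hlim : IsSuccLimit x
  · rw [stairPath_of_isSuccLimit hlim]
    have hsy : succ y < x := hlim.succ_lt hy
    have hysy : y < succ y := lt_succ_of_not_isMax hy.not_isMax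
    exact ⟨(ih _ hsy (fun z hz ↦ hx z (hz.trans hsy)) hysy).1.trans_le (le_fst_iSup_stairPath hsy),
      le_snd_iSup_stairPath hy⟩
  · rw [stairPath_of_not_isSuccLimit hlim]
    have hyB := hx y hy
    rcases nextPoint_eq_or (B := B) (M := M) (m := m) (⨆ z : Iio x, stairPath B M m z) with
      heq | ⟨-, hfst, hsnd⟩
    · rw [heq]
      exact ⟨(hB hyB).1, (hB hyB).2.le⟩
    · exact ⟨(le_fst_iSup_stairPath hy).trans_lt hfst,
        (snd_le_maxHeight hyB (le_fst_iSup_stairPath hy)).trans hsnd.le⟩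

theorem le_fst_stairPath (hB : B ⊆ Iio M ×ˢ Iio m) {x : K}
    (hx : ∀ y < x, stairPath B M m y ∈ B) : x ≤ (stairPath B M m x).1 := by
  induction x using WellFoundedLT.induction with
  | _ x ih =>
  by_contra! hlt
  have hy := ih _ hlt fun z hz ↦ hx z (hz.trans hlt)
  exact (hy.trans_lt (stairPath_fst_lt_and_snd_le hB hx hlt).1).false

theorem exists_stairPath_notMem (hB : B ⊆ Iio M ×ˢ Iio m) : ∃ x, stairPath B M m x ∉ B := by
  by_contra! hall
  obtain ⟨t, -, ht⟩ := isCompact_univ.exists_isGreatest (univ_nonempty (α := K))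
  have hM : M ≤ t := ht (mem_univ M)
  exact ((le_fst_stairPath hB fun y _ ↦ hall y).trans_lt ((hB (hall t)).1.trans_le hM)).false

theorem monotoneOn_stairPath (hB : B ⊆ Iio M ×ˢ Iio m) {l : K}
    (hl : ∀ y < l, stairPath B M m y ∈ B) : MonotoneOn (stairPath B M m) (Iic l) := by
  intro y _ x hx hyx
  rcases hyx.eq_or_lt with rfl | hyx
  · rfl
  · have h := stairPath_fst_lt_and_snd_le hB (fun z hz ↦ hl z (hz.trans_le hx)) hyx
    exact Prod.le_def.2 ⟨h.1.le, h.2⟩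

theorem continuousOn_stairPath (hB : B ⊆ Iio M ×ˢ Iio m) {l : K}
    (hl : ∀ y < l, stairPath B M m y ∈ B) : ContinuousOn (stairPath B M m) (Iic l) := by
  have hmono := monotoneOn_stairPath hB hl
  have hlub {x : K} (hx : IsSuccLimit x) (φ : K × K → K)
      (hφ : ∀ s : Iio x → K × K, φ (iSup s) = ⨆ y, φ (s y)) :
      IsLUB ((φ ∘ stairPath B M m) '' Iio x) (φ (stairPath B M m x)) := by
    have : Nonempty (Iio x) := (Iio_nonempty.2 hx.not_isMin).to_subtype
    rw [stairPath_of_isSuccLimit hx, hφ, image_eq_range]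
    exact isLUB_ciSup (bddAbove_of_compactSpace _)
  exact (monotone_fst.comp_monotoneOn hmono).continuousOn_Iic_of_isLUB
      (fun x _ hx ↦ hlub hx Prod.fst Prod.fst_iSup) |>.prodMk <|
    (monotone_snd.comp_monotoneOn hmono).continuousOn_Iic_of_isLUB
      (fun x _ hx ↦ hlub hx Prod.snd Prod.snd_iSup)

theorem snd_lt_snd_stairPath_succ (hB : B ⊆ Iio M ×ˢ Iio m) {y : K} (hy : ¬IsMax y)
    (hyB : stairPath B M m (succ y) ∈ B) {p : K × K} (hp : p ∈ B)
    (hpy : p.1 ≤ (stairPath B M m y).1) : p.2 < (stairPath B M m (succ y)).2 := by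
  have hlim : ¬IsSuccLimit (succ y) := fun h ↦ hy h.isMax
  have hle := snd_le_maxHeight hp (hpy.trans (le_fst_iSup_stairPath (lt_succ_of_not_isMax hy)))
  rw [stairPath_of_not_isSuccLimit hlim] at hyB ⊢
  rcases nextPoint_eq_or (B := B) (M := M) (m := m) (⨆ z : Iio (succ y), stairPath B M m z) with
    heq | ⟨-, -, hsnd⟩
  · rw [heq] at hyB
    exact absurd (hB hyB).1 (lt_irrefl M)
  · exact hle.trans_lt hsnd

theorem isSuccLimit_of_stairPath_notMem (hB : B ⊆ Iio M ×ˢ Iio m)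
    (hclosed : ∀ k < M, IsClosed {p ∈ B | p.1 ≤ k}) (hMm : (M, m) ∈ closure B) {l : K}
    (hlB : stairPath B M m l ∉ B) (hl : ∀ y < l, stairPath B M m y ∈ B) : IsSuccLimit l := by
  by_contra hlim
  have hs : (⨆ y : Iio l, stairPath B M m y).1 < M := by
    rw [Prod.fst_iSup]
    rcases not_isSuccLimit_iff.1 hlim with hmin | hprelim
    · have : IsEmpty (Iio l) := isEmpty_coe_sort.2 hmin.Iio_eq
      obtain ⟨p, hp⟩ := closure_nonempty_iff.1 ⟨_, hMm⟩
      rw [ciSup_of_empty]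
      exact bot_le.trans_lt (hB hp).1
    · obtain ⟨y, hy⟩ := not_isSuccPrelimit_iff.1 hprelim
      have : Nonempty (Iio l) := ⟨⟨y, hy.lt⟩⟩
      refine (ciSup_le fun z ↦ ?_).trans_lt (hB (hl y hy.lt)).1
      exact (monotoneOn_stairPath hB hl z.2.le hy.lt.le (hy.le_of_lt z.2)).1
  rw [stairPath_of_not_isSuccLimit hlim] at hlB
  exact hlB (nextPoint_mem (exists_lt_fst_maxHeight_lt_snd hB hclosed hMm hs))

theorem stairPath_mem_closure_image (hB : B ⊆ Iio M ×ˢ Iio m) {l : K}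
    (hl : ∀ y < l, stairPath B M m y ∈ B) (hlim : IsSuccLimit l) :
    stairPath B M m l ∈ closure (stairPath B M m '' Iio l) :=
  ((continuousOn_stairPath hB hl l self_mem_Iic).mono Iio_subset_Iic_self).mem_closure_image
    (hlim.isLUB_Iio.mem_closure (Iio_nonempty.2 hlim.not_isMin))

theorem stairPath_le_of_isSuccLimit (hB : B ⊆ Iio M ×ˢ Iio m) {l : K}
    (hl : ∀ y < l, stairPath B M m y ∈ B) (hlim : IsSuccLimit l) : stairPath B M m l ≤ (M, m) := by
  have hsub : closure B ⊆ Iic (M, m) := (isClosed_Iic.closure_subset_iff).2 fun p hp ↦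
    Prod.le_def.2 ⟨(hB hp).1.le, (hB hp).2.le⟩
  exact hsub (closure_mono (image_subset_iff.2 hl) (stairPath_mem_closure_image hB hl hlim))

theorem fst_stairPath_of_notMem (hB : B ⊆ Iio M ×ˢ Iio m)
    (hclosed : ∀ k < M, IsClosed {p ∈ B | p.1 ≤ k}) {l : K} (hlB : stairPath B M m l ∉ B)
    (hl : ∀ y < l, stairPath B M m y ∈ B) (hlim : IsSuccLimit l) :
    (stairPath B M m l).1 = M := by
  refine (stairPath_le_of_isSuccLimit hB hl hlim).1.eq_of_not_lt fun hlt ↦ hlB ?_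
  have hsub : stairPath B M m '' Iio l ⊆ {p ∈ B | p.1 ≤ (stairPath B M m l).1} := by
    rintro _ ⟨y, hy, rfl⟩
    exact ⟨hl y hy, (monotoneOn_stairPath hB hl hy.le le_rfl hy.le).1⟩
  exact ((hclosed _ hlt).closure_subset_iff.2 hsub (stairPath_mem_closure_image hB hl hlim)).1

theorem snd_stairPath_of_notMem (hB : B ⊆ Iio M ×ˢ Iio m)
    (hclosed : ∀ k < M, IsClosed {p ∈ B | p.1 ≤ k}) (hMm : (M, m) ∈ closure B) {l : K}
    (hlB : stairPath B M m l ∉ B) (hl : ∀ y < l, stairPath B M m y ∈ B) (hlim : IsSuccLimit l) :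
    (stairPath B M m l).2 = m := by
  refine (stairPath_le_of_isSuccLimit hB hl hlim).2.eq_of_not_lt fun hlt ↦ ?_
  obtain ⟨p, hp⟩ := closure_nonempty_iff.1 ⟨_, hMm⟩
  obtain ⟨q, hq, -, hq2⟩ :=
    exists_mem_lt_fst_lt_snd_of_mem_closure hMm (bot_le.trans_lt (hB hp).1) hlt
  have hq1 : q.1 < (⨆ y : Iio l, stairPath B M m y).1 := by
    rw [← stairPath_of_isSuccLimit hlim, fst_stairPath_of_notMem hB hclosed hlB hl hlim]
    exact (hB hq).1
  rw [Prod.fst_iSup] at hq1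
  have : Nonempty (Iio l) := (Iio_nonempty.2 hlim.not_isMin).to_subtype
  obtain ⟨⟨y, hy⟩, hqy⟩ := exists_lt_of_lt_ciSup hq1
  have hsy : succ y < l := hlim.succ_lt hy
  have hclimb := snd_lt_snd_stairPath_succ hB hy.not_isMax (hl _ hsy) hq hqy.le
  exact (hq2.trans (hclimb.trans_le (monotoneOn_stairPath hB hl hsy.le le_rfl hsy.le).2)).false

theorem exists_isSuccLimit_stairPath (hB : B ⊆ Iio M ×ˢ Iio m)
    (hclosed : ∀ k < M, IsClosed {p ∈ B | p.1 ≤ k}) (hMm : (M, m) ∈ closure B) :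
    ∃ l ≤ M, IsSuccLimit l ∧ ContinuousOn (stairPath B M m) (Iic l) ∧
      (∀ x < l, stairPath B M m x ∈ B) ∧ stairPath B M m l = (M, m) := by
  obtain ⟨l, hlB, hmin⟩ := wellFounded_lt.has_min _ (exists_stairPath_notMem hB)
  have hl : ∀ y < l, stairPath B M m y ∈ B := fun y hy ↦ by_contra fun h ↦ hmin y h hy
  have hlim := isSuccLimit_of_stairPath_notMem hB hclosed hMm hlB hl
  have hend : stairPath B M m l = (M, m) :=
    Prod.ext (fst_stairPath_of_notMem hB hclosed hlB hl hlim)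
      (snd_stairPath_of_notMem hB hclosed hMm hlB hl hlim)
  refine ⟨l, ?_, hlim, continuousOn_stairPath hB hl, hl, hend⟩
  simpa [hend] using le_fst_stairPath hB hl

end Properties

theorem stmt6 {K : Type u} [LinearOrder K] [WellFoundedLT K] [TopologicalSpace K]
    [OrderTopology K] [CompactSpace K] (M m : K) (B : Set (K × K))
    (hB : B ⊆ Set.Iic M ×ˢ Set.Iic m)
    (h1 : ∀ k < M, IsClosed ((Set.Iic k ×ˢ Set.Iic m) ∩ B))
    (h2 : (({M} : Set K) ×ˢ Set.Iic m) ∩ B = ∅)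
    (h3 : (Set.Iic M ×ˢ ({m} : Set K)) ∩ B = ∅)
    (h4 : (M, m) ∈ closure B \ B) :
    ∃ l : K, l ≤ M ∧ l ∈ closure (Set.Iio l) ∧
      ∃ f : ↥(Set.Iic l) → K × K, Continuous f ∧
        (∀ x : ↥(Set.Iic l), (x : K) < l → f x ∈ B) ∧
        ∀ x : ↥(Set.Iic l), (x : K) = l → f x = (M, m) := by
  have hB' : B ⊆ Iio M ×ˢ Iio m := fun p hp ↦ by
    obtain ⟨hpM, hpm⟩ := hB hp
    refine ⟨hpM.lt_of_ne fun h ↦ ?_, hpm.lt_of_ne fun h ↦ ?_⟩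
    · exact notMem_empty p (h2 ▸ ⟨⟨h, hpm⟩, hp⟩)
    · exact notMem_empty p (h3 ▸ ⟨⟨hpM, h⟩, hp⟩)
  have hclosed : ∀ k < M, IsClosed {p ∈ B | p.1 ≤ k} := fun k hk ↦ by
    convert h1 k hk using 1
    ext p
    exact ⟨fun ⟨hp, hpk⟩ ↦ ⟨⟨hpk, (hB hp).2⟩, hp⟩, fun ⟨⟨hpk, _⟩, hp⟩ ↦ ⟨hp, hpk⟩⟩
  have : Nonempty K := ⟨M⟩
  let := WellFoundedLT.toOrderBot K
  let := WellFoundedLT.conditionallyCompleteLinearOrderBot K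
  obtain ⟨l, hlM, hlim, hcont, hpath, hend⟩ := exists_isSuccLimit_stairPath hB' hclosed h4.1
  refine ⟨l, hlM, hlim.isLUB_Iio.mem_closure (Iio_nonempty.2 hlim.not_isMin),
    stairPath B M m ∘ Subtype.val, hcont.comp_continuous continuous_subtype_val Subtype.prop,
    fun x hx ↦ hpath x hx, fun x hx ↦ ?_⟩
  rw [Function.comp_apply, hx, hend]
end

section
/- Let J be a non-compact well-ordered space with one-point compactification J ∪ {∞_J}. The space (J ∪ {∞_J}) × (J ∪ {∞_J}), with the product topology, is a J-convergence space. -/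
open Set Topology TopologicalSpace

universe u v w

/-!
Suppose `A ⊆ (J ∪ {∞}) × (J ∪ {∞})` is `J`-closed but not closed, and take `x ∈ closure A \ A`
minimal for the strict product order. In `J ∪ {∞}` itself `J`-closed sets are closed: if `ℓ` is
the least point of `closure B \ B`, then `B ∩ Iio ℓ` is almost closed with limit `ℓ`, and the
inclusion of its one-point compactification converges to `ℓ ∉ B`. Applied to the two lines
through `x`, this shows that `x` is not a limit of `A` along them, so `x` is approached by `A`
from strictly below in both coordinates, where by minimality `A` is relatively closed. Choosing
points of `A` increasing in both coordinates, and taking coordinatewise suprema at limit stages,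
gives a transfinite sequence in `A` whose coordinates are normal functions. It cannot stay below
`x` forever; at the first ordinal where it leaves, `J`-closedness (after reindexing the sequence
by its first coordinates `I ⊆ J`) puts its value in `A`, on a line through `x` and arbitrarily
close to `x`, which is a contradiction.
-/

open Order Filter

instance orderTopology_withTop {α : Type*} [Preorder α] : OrderTopology (WithTop α) := ⟨rfl⟩

theorem isJConvergence_iff {J : Type v} [LinearOrder J] {X : Type u} [TopologicalSpace X] :
    IsJConvergence J X ↔ ∀ A : Set X, JClosedSet J X A → IsClosed A :=
  forall_congr' fun A => not_imp_comm.trans <| by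
    simp only [JClosedSet, not_exists, not_and, not_not]

theorem JClosedSet.preimage {J : Type v} [LinearOrder J] {X : Type u} {Y : Type w}
    [TopologicalSpace X] [TopologicalSpace Y] {A : Set Y} (hA : JClosedSet J Y A) {g : X → Y}
    (hg : Continuous g) : JClosedSet J X (g ⁻¹' A) :=
  fun I hI f hf hfA => hA I hI (g ∘ f) (hg.comp hf) hfA

section WellOrderedSpace

variable {α : Type*} [LinearOrder α] [WellFoundedLT α]

theorem exists_isLUB_of_bddAbove {s : Set α} (hs : BddAbove s) : ∃ a, IsLUB s a :=
  ⟨_, show IsLeast _ _ from ⟨wellFounded_lt.min_mem _ hs, fun _ hb => wellFounded_lt.min_le hb⟩⟩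

theorem exists_isLUB_prod {β : Type*} [LinearOrder β] [WellFoundedLT β] [OrderTop α] [OrderTop β]
    (s : Set (α × β)) : ∃ p, IsLUB s p := by
  obtain ⟨a, ha⟩ := exists_isLUB_of_bddAbove (OrderTop.bddAbove (Prod.fst '' s))
  obtain ⟨b, hb⟩ := exists_isLUB_of_bddAbove (OrderTop.bddAbove (Prod.snd '' s))
  exact ⟨(a, b), isLUB_prod.2 ⟨ha, hb⟩⟩

variable [TopologicalSpace α] [OrderTopology α]

theorem compactSpace_of_wellFoundedLT [OrderTop α] : CompactSpace α := by
  have : Nonempty α := ⟨⊤⟩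
  let := WellFoundedLT.toOrderBot α
  let := WellFoundedLT.conditionallyCompleteLinearOrderBot α
  exact ⟨by simpa using isCompact_Icc (a := (⊥ : α)) (b := ⊤)⟩

theorem mem_closure_inter_Iio_of_notMem {s : Set α} {a : α} (ha : a ∈ closure s) (has : a ∉ s) :
    a ∈ closure (s ∩ Iio a) := by
  refine closure_mono (fun z hz => ?_) ((isLowerSet_Iic a).isOpen.inter_closure ⟨le_rfl, ha⟩)
  exact ⟨hz.2, lt_of_le_of_ne hz.1 (by rintro rfl; exact has hz.2)⟩

theorem mem_closure_inter_Iio_prod_Iio_or {β : Type*} [LinearOrder β] [WellFoundedLT β]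
    [TopologicalSpace β] [OrderTopology β] {s : Set (α × β)} {x : α × β} (hx : x ∈ closure s) :
    x ∈ closure (s ∩ Iio x.1 ×ˢ Iio x.2) ∨ x ∈ closure (s ∩ {y | y.1 = x.1}) ∨
      x ∈ closure (s ∩ {y | y.2 = x.2}) := by
  have hx' := ((isLowerSet_Iic x.1).isOpen.prod (isLowerSet_Iic x.2).isOpen).inter_closure
    ⟨⟨le_rfl, le_rfl⟩, hx⟩
  simp only [← mem_union, ← closure_union]
  refine closure_mono ?_ hx'
  rintro y ⟨⟨h₁, h₂⟩, hy⟩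
  rcases (mem_Iic.1 h₁).lt_or_eq with h₁ | h₁
  · rcases (mem_Iic.1 h₂).lt_or_eq with h₂ | h₂
    · exact Or.inl ⟨hy, h₁, h₂⟩
    · exact Or.inr (Or.inr ⟨hy, h₂⟩)
  · exact Or.inr (Or.inl ⟨hy, h₁⟩)

theorem StrictMono.isNormal_of_isClosed_range {γ : Type*} [LinearOrder γ] {f : γ → α}
    (hf : StrictMono f) (hcl : IsClosed (range f)) : IsNormal f := by
  refine isNormal_iff.2 ⟨hf, fun a ha b hb => ?_⟩
  obtain ⟨c, hc⟩ := not_isMin_iff.1 ha.not_isMin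
  obtain ⟨s, hs⟩ := exists_isLUB_of_bddAbove
    (⟨f a, by rintro _ ⟨z, hz, rfl⟩; exact (hf hz).le⟩ : BddAbove (f '' Iio a))
  obtain ⟨d, rfl⟩ := hcl.closure_subset_iff.2 (image_subset_range _ _)
    (hs.mem_closure ⟨f c, c, hc, rfl⟩)
  have had : a ≤ d := by
    by_contra! hda
    obtain ⟨e, hde, hea⟩ := (not_covBy_iff hda).1 (ha.isSuccPrelimit d)
    exact (hf hde).not_ge (hs.1 ⟨e, hea, rfl⟩)
  exact (hf.monotone had).trans (hs.2 (by rintro _ ⟨z, hz, rfl⟩; exact hb z hz))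

end WellOrderedSpace

theorem mem_closure_image_Iio_of_isLUB {γ P : Type*} [LinearOrder γ] [Preorder P]
    [TopologicalSpace P] [SupConvergenceClass P] {f : γ → P} {c : γ} {p : P}
    (hf : MonotoneOn f (Iio c)) (hc : ¬IsMin c) (hp : IsLUB (f '' Iio c) p) :
    p ∈ closure (f '' Iio c) := by
  obtain ⟨b, hb⟩ := not_isMin_iff.1 hc
  have : Nonempty (Iio c) := ⟨⟨b, hb⟩⟩
  rw [image_eq_range] at hp ⊢
  exact mem_closure_of_tendsto
    (tendsto_atTop_isLUB (f := fun z : Iio c => f z) (fun a b h => hf a.2 b.2 h) hp)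
    (Eventually.of_forall (mem_range_self ·))

theorem isNormal_restrict_Iic {γ β : Type*} [LinearOrder γ] [LinearOrder β] {f : γ → β} {c : γ}
    (hf : StrictMonoOn f (Iic c))
    (hlim : ∀ o ≤ c, IsSuccLimit o → IsLUB (f '' Iio o) (f o)) :
    IsNormal fun o : Iic c => f o := by
  refine isNormal_iff.2 ⟨fun a b h => hf a.2 b.2 h, fun o ho b hb =>
    (hlim o o.2 ((initialSegIic c).isSuccLimit_apply_iff.2 ho)).2 ?_⟩
  rintro _ ⟨z, hz, rfl⟩
  exact hb ⟨z, hz.le.trans o.2⟩ hz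

section WithTopInclusion

variable {J : Type v} [LinearOrder J] {C : Set (WithTop J)} {ℓ : WithTop J}

def inclusionWithTop (C : Set (WithTop J)) (ℓ : WithTop J) :
    WithTop (WithTop.some ⁻¹' C : Set J) → WithTop J :=
  WithTop.recTopCoe ℓ fun i => (i : J)

theorem strictMono_inclusionWithTop (hC : C ⊆ Iio ℓ) : StrictMono (inclusionWithTop C ℓ) := by
  intro a b hab
  induction b using WithTop.recTopCoe with
  | top =>
    induction a using WithTop.recTopCoe with
    | top => exact absurd hab (lt_irrefl _)
    | coe i => exact hC i.2
  | coe j =>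
    induction a using WithTop.recTopCoe with
    | top => exact absurd hab not_top_lt
    | coe i =>
      have hij : i < j := WithTop.coe_lt_coe.1 hab
      exact WithTop.coe_lt_coe.2 hij

theorem subset_range_coe_of_subset_Iio (hC : C ⊆ Iio ℓ) : C ⊆ range ((↑) : J → WithTop J) :=
  fun c hc => WithTop.ne_top_iff_exists.1 (show c ≠ ⊤ from ne_top_of_lt (hC hc))

theorem range_inclusionWithTop (hC : C ⊆ Iio ℓ) : range (inclusionWithTop C ℓ) = insert ℓ C := by
  refine Subset.antisymm ?_ (insert_subset ⟨⊤, rfl⟩ fun c hc => ?_)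
  · rintro _ ⟨z, rfl⟩
    induction z using WithTop.recTopCoe with
    | top => exact mem_insert _ _
    | coe i => exact mem_insert_of_mem _ i.2
  · obtain ⟨j, rfl⟩ := subset_range_coe_of_subset_Iio hC hc
    exact ⟨((⟨j, hc⟩ : WithTop.some ⁻¹' C) : WithTop _), rfl⟩

theorem almostClosed_preimage_coe (hC : C ⊆ Iio ℓ) (hℓ : ℓ ∈ closure C)
    (hcl : IsClosed (insert ℓ C)) : AlmostClosed (WithTop.some ⁻¹' C) := by
  have himage : (fun j : J => (j : WithTop J)) '' (WithTop.some ⁻¹' C) = C :=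
    image_preimage_eq_of_subset (subset_range_coe_of_subset_Iio hC)
  refine ⟨ℓ, ?_, ?_⟩ <;> rw [himage]
  · exact Subset.antisymm
      (fun p hp => (hcl.closure_subset_iff.2 (subset_insert _ _) hp.1).resolve_right hp.2)
      (singleton_subset_iff.2 ⟨hℓ, fun h => lt_irrefl ℓ (hC h)⟩)
  · exact ⟨fun c hc => hC hc,
      fun s hs => closure_minimal (fun c hc => (hs c hc).le) isClosed_Iic hℓ⟩

variable [WellFoundedLT J]

theorem continuous_inclusionWithTop (hC : C ⊆ Iio ℓ) (hcl : IsClosed (insert ℓ C)) :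
    Continuous (inclusionWithTop C ℓ) :=
  ((strictMono_inclusionWithTop hC).isNormal_of_isClosed_range
    (range_inclusionWithTop hC ▸ hcl)).continuous

theorem exists_almostClosed_orderIso {α : Type*} [LinearOrder α] [WellFoundedLT α] [OrderTop α]
    [TopologicalSpace α] [OrderTopology α] {u : α → WithTop J} (hu : IsNormal u)
    (htop : IsSuccLimit (⊤ : α)) : ∃ I : Set J, AlmostClosed I ∧ Nonempty (WithTop I ≃o α) := by
  have : CompactSpace α := compactSpace_of_wellFoundedLT
  have hC : u '' Iio ⊤ ⊆ Iio (u ⊤) := image_subset_iff.2 fun z hz => hu.strictMono hz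
  have hrange : range u = insert (u ⊤) (u '' Iio ⊤) := by
    rw [← image_univ, ← Iic_top, ← Iio_insert, image_insert_eq]
  have hcl : IsClosed (insert (u ⊤) (u '' Iio ⊤)) :=
    hrange ▸ (isCompact_range hu.continuous).isClosed
  obtain ⟨z, hz⟩ := not_isMin_iff.1 htop.not_isMin
  have hℓ : u ⊤ ∈ closure (u '' Iio ⊤) :=
    (hu.isLUB_image_Iio_of_isSuccLimit htop).mem_closure ⟨u z, mem_image_of_mem u hz⟩
  refine ⟨_, almostClosed_preimage_coe hC hℓ hcl, ⟨?_⟩⟩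
  exact ((strictMono_inclusionWithTop hC).orderIso _).trans <|
    (OrderIso.setCongr _ _ ((range_inclusionWithTop hC).trans hrange.symm)).trans
      (hu.strictMono.orderIso u).symm

theorem JClosedSet.apply_top_mem {X : Type u} [TopologicalSpace X] {A : Set X}
    (hA : JClosedSet J X A) {α : Type*} [LinearOrder α] [WellFoundedLT α] [OrderTop α]
    [TopologicalSpace α] [OrderTopology α] {u : α → WithTop J} (hu : IsNormal u)
    (htop : IsSuccLimit (⊤ : α)) {φ : α → X} (hφ : Continuous φ) (hφA : ∀ z < ⊤, φ z ∈ A) :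
    φ ⊤ ∈ A := by
  obtain ⟨I, hI, ⟨e⟩⟩ := exists_almostClosed_orderIso hu htop
  simpa using hA I hI (φ ∘ e) (hφ.comp e.continuous)
    fun i => hφA _ (e.map_top ▸ e.strictMono (WithTop.coe_lt_top i))

end WithTopInclusion

section TransfiniteIteration

variable {P : Type*} [Preorder P]

structure IsTransfiniteIteration (φ : Ordinal.{w} → P) (step : P → P) : Prop where
  apply_succ (o : Ordinal.{w}) : φ (succ o) = step (φ o)
  isLUB_of_isSuccLimit {o : Ordinal.{w}} : IsSuccLimit o → IsLUB (φ '' Iio o) (φ o)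

theorem exists_isTransfiniteIteration (hP : ∀ s : Set P, ∃ p, IsLUB s p) (z : P) (step : P → P) :
    ∃ φ : Ordinal.{w} → P, φ 0 = z ∧ IsTransfiniteIteration φ step := by
  choose lub hlub using hP
  refine ⟨fun o => Ordinal.limitRecOn o z (fun _ p => step p)
    fun o _ ψ => lub (range fun o' : Iio o => ψ o'.1 o'.2), Ordinal.limitRecOn_zero .., ?_, ?_⟩
  · intro o
    rw [Order.succ_eq_add_one]
    exact Ordinal.limitRecOn_add_one ..
  · intro o ho
    rw [Ordinal.limitRecOn_limit _ _ _ _ ho, image_eq_range]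
    exact hlub _

variable {φ : Ordinal.{w} → P} {step : P → P} {G : Set P} {c : Ordinal.{w}}

theorem IsTransfiniteIteration.monotoneOn (hφ : IsTransfiniteIteration φ step)
    (hstep : ∀ y ∈ G, y ≤ step y) (hG : ∀ o < c, φ o ∈ G) : MonotoneOn φ (Iic c) := by
  intro a _ b hb hab
  induction b using WellFoundedLT.induction with
  | _ b ih =>
  rcases hab.lt_or_eq with hab | rfl
  · rcases Ordinal.zero_or_succ_or_isSuccLimit b with rfl | ⟨b, rfl⟩ | hb'
    · exact (not_lt_zero hab).elim
    · rw [hφ.apply_succ]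
      exact (ih b (lt_succ b) ((lt_succ b).le.trans hb) (le_of_lt_succ hab)).trans
        (hstep _ (hG b ((lt_succ b).trans_le hb)))
    · exact (hφ.isLUB_of_isSuccLimit hb').1 (mem_image_of_mem φ hab)
  · exact le_rfl

theorem IsTransfiniteIteration.strictMonoOn_comp {β : Type*} [Preorder β] {g : P → β}
    (hφ : IsTransfiniteIteration φ step) (hg : Monotone g) (hstep : ∀ y ∈ G, y ≤ step y)
    (hgstep : ∀ y ∈ G, g y < g (step y)) (hG : ∀ o < c, φ o ∈ G) :
    StrictMonoOn (g ∘ φ) (Iic c) := by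
  intro a _ b hb hab
  calc g (φ a) < g (step (φ a)) := hgstep _ (hG a (hab.trans_le hb))
    _ = g (φ (succ a)) := by rw [hφ.apply_succ]
    _ ≤ g (φ b) := hg (hφ.monotoneOn hstep hG ((succ_le_of_lt hab).trans hb) hb
      (succ_le_of_lt hab))

theorem IsTransfiniteIteration.exists_isSuccLimit {β : Type*} [Preorder β] [Small.{w} β]
    {g : P → β} (hφ : IsTransfiniteIteration φ step) (hg : Monotone g)
    (hstep : ∀ y ∈ G, y ≤ step y) (hgstep : ∀ y ∈ G, g y < g (step y))
    (hstepG : ∀ y ∈ G, step y ∈ G) (h0 : φ 0 ∈ G) :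
    ∃ τ, IsSuccLimit τ ∧ (∀ o < τ, φ o ∈ G) ∧ φ τ ∉ G := by
  have hexit : ∃ o, φ o ∉ G := by
    by_contra! h
    exact not_injective_of_ordinal (g ∘ φ) (StrictMono.injective fun a b hab =>
      hφ.strictMonoOn_comp (c := b) hg hstep hgstep (fun o _ => h o) hab.le self_mem_Iic hab)
  obtain ⟨τ, hτ, hτmin⟩ := wellFounded_lt.has_min _ hexit
  have hG : ∀ o < τ, φ o ∈ G := fun o ho => by_contra fun h => hτmin o h ho
  refine ⟨τ, ?_, hG, hτ⟩
  rcases Ordinal.zero_or_succ_or_isSuccLimit τ with rfl | ⟨o, rfl⟩ | hτ'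
  · exact absurd h0 hτ
  · exact absurd (hφ.apply_succ o ▸ hstepG _ (hG o (lt_succ o))) hτ
  · exact hτ'

theorem IsTransfiniteIteration.forall_lt_mem [TopologicalSpace P] [SupConvergenceClass P]
    {A : Set P} (hφ : IsTransfiniteIteration φ step) (hstep : ∀ y ∈ G, y ≤ step y)
    (hG : ∀ o < c, φ o ∈ G) (h0 : φ 0 ∈ A) (hstepA : ∀ y ∈ G, step y ∈ A)
    (hA : ∀ y ∈ G, y ∈ closure A → y ∈ A) : ∀ o < c, φ o ∈ A := by
  intro o
  induction o using WellFoundedLT.induction with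
  | _ o ih =>
  intro ho
  rcases Ordinal.zero_or_succ_or_isSuccLimit o with rfl | ⟨o, rfl⟩ | ho'
  · exact h0
  · exact hφ.apply_succ o ▸ hstepA _ (hG o ((lt_succ o).trans ho))
  · refine hA _ (hG o ho) (closure_mono
      (image_subset_iff.2 fun o' ho' => ih o' ho' (lt_trans ho' ho))
      (mem_closure_image_Iio_of_isLUB ?_ ho'.not_isMin (hφ.isLUB_of_isSuccLimit ho')))
    exact (hφ.monotoneOn hstep hG).mono fun o' ho' => le_trans (le_of_lt ho') ho.le

end TransfiniteIteration

section JClosedSets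

variable {J : Type v} [LinearOrder J] [WellFoundedLT J]

theorem isJConvergence_withTop : IsJConvergence J (WithTop J) := by
  refine isJConvergence_iff.2 fun B hB => isClosed_of_closure_subset fun b hb => ?_
  by_contra hbB
  obtain ⟨ℓ, ⟨hℓ, hℓB⟩, hℓmin⟩ := wellFounded_lt.has_min _ (⟨b, hb, hbB⟩ : (closure B \ B).Nonempty)
  have hC : B ∩ Iio ℓ ⊆ Iio ℓ := inter_subset_right
  have hℓC : ℓ ∈ closure (B ∩ Iio ℓ) := mem_closure_inter_Iio_of_notMem hℓ hℓB
  have hcl : closure (B ∩ Iio ℓ) ⊆ insert ℓ (B ∩ Iio ℓ) := fun p hp => by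
    have hpℓ : p ≤ ℓ := closure_minimal (fun q hq => le_of_lt hq.2) isClosed_Iic hp
    rcases hpℓ.lt_or_eq with hpℓ | rfl
    · exact Or.inr ⟨by_contra fun hpB => hℓmin p ⟨closure_mono inter_subset_left hp, hpB⟩ hpℓ, hpℓ⟩
    · exact mem_insert _ _
  have hcl' : IsClosed (insert ℓ (B ∩ Iio ℓ)) := by
    rw [← Subset.antisymm hcl (insert_subset hℓC subset_closure)]
    exact isClosed_closure
  exact hℓB (hB _ (almostClosed_preimage_coe hC hℓC hcl') _
    (continuous_inclusionWithTop hC hcl') fun i => i.2.1)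

theorem JClosedSet.mem_of_mem_closure_inter_fst_eq {A : Set (WithTop J × WithTop J)}
    (hA : JClosedSet J _ A) {x : WithTop J × WithTop J}
    (hx : x ∈ closure (A ∩ {y | y.1 = x.1})) : x ∈ A := by
  have hB := isJConvergence_iff.1 isJConvergence_withTop _
    (hA.preimage (Continuous.prodMk_right x.1))
  refine hB.closure_subset (closure_mono ?_ (mem_closure_image continuous_snd.continuousAt hx))
  rintro _ ⟨y, ⟨hyA, hy⟩, rfl⟩
  rwa [mem_preimage, ← hy]

theorem JClosedSet.mem_of_mem_closure_inter_snd_eq {A : Set (WithTop J × WithTop J)}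
    (hA : JClosedSet J _ A) {x : WithTop J × WithTop J}
    (hx : x ∈ closure (A ∩ {y | y.2 = x.2})) : x ∈ A := by
  have hB := isJConvergence_iff.1 isJConvergence_withTop _
    (hA.preimage (Continuous.prodMk_left x.2))
  refine hB.closure_subset (closure_mono ?_ (mem_closure_image continuous_fst.continuousAt hx))
  rintro _ ⟨y, ⟨hyA, hy⟩, rfl⟩
  rwa [mem_preimage, ← hy]

theorem JClosedSet.exists_mem_Ioc_prod_Ioc {A : Set (WithTop J × WithTop J)}
    (hA : JClosedSet J _ A) {x y : WithTop J × WithTop J}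
    (hx : x ∈ closure (A ∩ Iio x.1 ×ˢ Iio x.2))
    (hrel : ∀ z ∈ Iio x.1 ×ˢ Iio x.2, z ∈ closure A → z ∈ A) (hy : y ∈ Iio x.1 ×ˢ Iio x.2) :
    ∃ p ∈ A, p ∈ Ioc y.1 x.1 ×ˢ Ioc y.2 x.2 ∧ (p.1 = x.1 ∨ p.2 = x.2) := by
  set G := Iio x.1 ×ˢ Iio x.2
  have hcof : ∀ z ∈ G, ∃ z' ∈ A ∩ G, z.1 < z'.1 ∧ z.2 < z'.2 := fun z hz => by
    obtain ⟨z', hz', hz'A⟩ := mem_closure_iff.1 hx _ (isOpen_Ioi.prod isOpen_Ioi) hz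
    exact ⟨z', hz'A, hz'⟩
  choose! step hstepAG hstep using hcof
  have hle : ∀ z ∈ G, z ≤ step z := fun z hz => ⟨(hstep z hz).1.le, (hstep z hz).2.le⟩
  obtain ⟨φ, hφ0, hφ⟩ := exists_isTransfiniteIteration.{v} exists_isLUB_prod (step y) step
  obtain ⟨τ, hτ, hG, hτG⟩ := hφ.exists_isSuccLimit monotone_fst hle (fun z hz => (hstep z hz).1)
    (fun z hz => (hstepAG z hz).2) (hφ0 ▸ (hstepAG y hy).2)
  have hmono₁ := hφ.strictMonoOn_comp monotone_fst hle (fun z hz => (hstep z hz).1) hG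
  have hmono₂ := hφ.strictMonoOn_comp monotone_snd hle (fun z hz => (hstep z hz).2) hG
  have hlim : ∀ o, IsSuccLimit o → IsLUB ((fun o => (φ o).1) '' Iio o) (φ o).1 ∧
      IsLUB ((fun o => (φ o).2) '' Iio o) (φ o).2 := fun o ho => by
    simpa only [isLUB_prod, image_image] using hφ.isLUB_of_isSuccLimit ho
  have hu₁ := isNormal_restrict_Iic hmono₁ fun o _ ho => (hlim o ho).1
  have hu₂ := isNormal_restrict_Iic hmono₂ fun o _ ho => (hlim o ho).2
  have hφA := hφ.forall_lt_mem hle hG (hφ0 ▸ (hstepAG y hy).1) (fun z hz => (hstepAG z hz).1) hrel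
  have hτA : φ τ ∈ A := hA.apply_top_mem (α := Iic τ) hu₁
    ((initialSegIic τ).isSuccLimit_apply_iff.1 hτ) (hu₁.continuous.prodMk hu₂.continuous)
    fun o ho => hφA o ho
  obtain ⟨hτ₁, hτ₂⟩ : (φ τ).1 ≤ x.1 ∧ (φ τ).2 ≤ x.2 := (hφ.isLUB_of_isSuccLimit hτ).2 <| by
    rintro _ ⟨o, ho, rfl⟩
    exact ⟨(hG o ho).1.le, (hG o ho).2.le⟩
  have h0τ : (0 : Ordinal) < τ := hτ.bot_lt
  refine ⟨φ τ, hτA, ⟨⟨?_, hτ₁⟩, ?_, hτ₂⟩, ?_⟩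
  · exact (hφ0 ▸ (hstep y hy).1).trans (hmono₁ h0τ.le self_mem_Iic h0τ)
  · exact (hφ0 ▸ (hstep y hy).2).trans (hmono₂ h0τ.le self_mem_Iic h0τ)
  · by_contra! h
    exact hτG ⟨lt_of_le_of_ne hτ₁ h.1, lt_of_le_of_ne hτ₂ h.2⟩

theorem JClosedSet.mem_closure_inter_fst_eq_or_snd_eq {A : Set (WithTop J × WithTop J)}
    (hA : JClosedSet J _ A) {x : WithTop J × WithTop J}
    (hx : x ∈ closure (A ∩ Iio x.1 ×ˢ Iio x.2))
    (hrel : ∀ z ∈ Iio x.1 ×ˢ Iio x.2, z ∈ closure A → z ∈ A) :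
    x ∈ closure (A ∩ ({y | y.1 = x.1} ∪ {y | y.2 = x.2})) := by
  obtain ⟨z, -, hz⟩ := closure_nonempty_iff.1 ⟨x, hx⟩
  refine mem_closure_iff_nhds.2 fun N hN => ?_
  obtain ⟨U, hU, V, hV, hUV⟩ := mem_nhds_prod_iff.1 hN
  obtain ⟨a, ha, haU⟩ := exists_Ioc_subset_of_mem_nhds hU ⟨z.1, hz.1⟩
  obtain ⟨b, hb, hbV⟩ := exists_Ioc_subset_of_mem_nhds hV ⟨z.2, hz.2⟩
  obtain ⟨p, hpA, hp, hpx⟩ := hA.exists_mem_Ioc_prod_Ioc hx hrel (y := (a, b)) ⟨ha, hb⟩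
  exact ⟨p, hUV ⟨haU hp.1, hbV hp.2⟩, hpA, hpx⟩

end JClosedSets

theorem stmt7_general {J : Type v} [LinearOrder J] [WellFoundedLT J] :
    IsJConvergence J (WithTop J × WithTop J) := by
  refine isJConvergence_iff.2 fun A hA => isClosed_of_closure_subset fun x₀ hx₀ => ?_
  by_contra hx₀A
  have hwf : WellFounded fun y x : WithTop J × WithTop J => y ∈ Iio x.1 ×ˢ Iio x.2 :=
    Subrelation.wf (fun {_ _} h => h.1) (InvImage.wf Prod.fst wellFounded_lt)
  obtain ⟨x, ⟨hx, hxA⟩, hmin⟩ := hwf.has_min (closure A \ A) ⟨x₀, hx₀, hx₀A⟩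
  have hrel : ∀ z ∈ Iio x.1 ×ˢ Iio x.2, z ∈ closure A → z ∈ A :=
    fun z hz hzA => by_contra fun h => hmin z ⟨hzA, h⟩ hz
  have hfst : x ∉ closure (A ∩ {y | y.1 = x.1}) :=
    fun h => hxA (hA.mem_of_mem_closure_inter_fst_eq h)
  have hsnd : x ∉ closure (A ∩ {y | y.2 = x.2}) :=
    fun h => hxA (hA.mem_of_mem_closure_inter_snd_eq h)
  rcases mem_closure_inter_Iio_prod_Iio_or hx with hbox | h | h
  · have := hA.mem_closure_inter_fst_eq_or_snd_eq hbox hrel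
    rw [inter_union_distrib_left, closure_union] at this
    exact this.elim hfst hsnd
  · exact hfst h
  · exact hsnd h

theorem stmt7 {J : Type v} [LinearOrder J] [WellFoundedLT J] [TopologicalSpace J]
    [OrderTopology J] [NoncompactSpace J] :
    IsJConvergence J (WithTop J × WithTop J) :=
  stmt7_general
end
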